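/- arXiv:1307.4250 — 4 statements merged into one kernel-verified Lean document; each statement's English description precedes it below -/
import Mathlib

section
/- For every positive integer n, the number of divisors satisfies τ(n) ≪ ∑_{d | n, d ≤ n^{1/3}} τ(d)^3, with an absolute implied constant. -/
/-!
Write `n = ∏ p ^ aₚ` and view `n` as the set of slots `(p, b)`, `b < aₚ`, the slot `(p, b)`
having weight `log p` and value `log (b + 2) - log (b + 1)`: the weights add up to `log n`, the
values to `log τ(n)`. Filling a knapsack of capacity `(log n) / 3` greedily by value per weight
yields slots of total weight at most `(log n) / 3` and total value at least a third of
`log τ(n)`, up to the value `log 2` of a single slot. The product of the chosen primes is a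
divisor `d` with `log d` equal to that weight and `log τ(d)` at least that value, since the values
of the slots of one prime decrease; hence `d ≤ n^(1/3)` and `τ(n) ≤ 8 τ(d)^3`.
-/

open Finset

section Knapsack

variable {ι : Type*} [DecidableEq ι] (v w : ι → ℝ)

theorem exists_subset_sum_le_and_density_threshold (I : Finset ι) (hw : ∀ i ∈ I, 0 < w i)
    {W : ℝ} (hW : 0 ≤ W) :
    ∃ S ⊆ I, ∑ i ∈ S, w i ≤ W ∧
      (S = I ∨ ∃ x ∈ I \ S, W < ∑ i ∈ S, w i + w x ∧
        (∀ i ∈ S, v x * w i ≤ v i * w x) ∧ ∀ j ∈ I \ S, v j * w x ≤ v x * w j) := by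
  induction I using Finset.strongInduction generalizing W with
  | _ I ih =>
  rcases I.eq_empty_or_nonempty with rfl | hne
  · exact ⟨∅, subset_rfl, by simpa using hW, Or.inl rfl⟩
  obtain ⟨y, hyI, hy_max⟩ := I.exists_max_image (fun i => v i / w i) hne
  have hy_dense : ∀ j ∈ I, v j * w y ≤ v y * w j := fun j hj =>
    (div_le_div_iff₀ (hw j hj) (hw y hyI)).mp (hy_max j hj)
  by_cases hy_fits : w y ≤ W
  · obtain ⟨S, hSI, hSW, hS⟩ := ih (I.erase y) (erase_ssubset hyI)
      (fun i hi => hw i (mem_of_mem_erase hi)) (sub_nonneg.mpr hy_fits)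
    have hyS : y ∉ S := fun h => notMem_erase y I (hSI h)
    have hsdiff : I \ insert y S = I.erase y \ S := by
      rw [sdiff_insert, erase_sdiff_comm]
    refine ⟨insert y S, insert_subset hyI (hSI.trans (erase_subset y I)), ?_, ?_⟩
    · rw [sum_insert hyS]; linarith
    rcases hS with rfl | ⟨x, hx, hxW, hxS, hx_dense⟩
    · exact Or.inl (insert_erase hyI)
    refine Or.inr ⟨x, hsdiff ▸ hx, by rw [sum_insert hyS]; linarith, ?_, hsdiff ▸ hx_dense⟩
    rintro i hi
    rcases mem_insert.mp hi with rfl | hi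
    · exact hy_dense x (mem_of_mem_erase (mem_sdiff.mp hx).1)
    · exact hxS i hi
  · exact ⟨∅, empty_subset I, by simpa using hW, Or.inr ⟨y, by simpa using hyI,
      by simpa using not_le.mp hy_fits, by simp, fun j hj => hy_dense j (mem_sdiff.mp hj).1⟩⟩

theorem exists_subset_mul_sum_le_and_sum_le (I : Finset ι) (hw : ∀ i ∈ I, 0 < w i)
    {M : ℝ} (hM : 0 ≤ M) (hv : ∀ i ∈ I, 0 ≤ v i ∧ v i ≤ M) {k : ℝ} (hk : 1 ≤ k) :
    ∃ S ⊆ I, k * ∑ i ∈ S, w i ≤ ∑ i ∈ I, w i ∧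
      ∑ i ∈ I, v i ≤ k * (∑ i ∈ S, v i + M) := by
  have hk0 : 0 < k := by linarith
  obtain ⟨S, hSI, hSW, hS⟩ := exists_subset_sum_le_and_density_threshold v w I hw
    (div_nonneg (sum_nonneg fun i hi => (hw i hi).le) hk0.le)
  refine ⟨S, hSI, by rwa [le_div_iff₀' hk0] at hSW, ?_⟩
  have hvS : 0 ≤ ∑ i ∈ S, v i := sum_nonneg fun i hi => (hv i (hSI hi)).1
  rcases hS with rfl | ⟨x, hx, hxW, hxS, hx_dense⟩
  · nlinarith
  obtain ⟨hxI, -⟩ := mem_sdiff.mp hx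
  have hwx := hw x hxI
  have hvx := hv x hxI
  have hsplit_v := sum_sdiff hSI (f := v)
  have hsplit_w := sum_sdiff hSI (f := w)
  -- `x` has the least density in `S` and the greatest outside `S`; compare both sides with it.
  have hout : (∑ j ∈ I \ S, v j) * w x ≤ v x * ∑ j ∈ I \ S, w j := by
    rw [sum_mul, mul_sum]; exact sum_le_sum hx_dense
  have hin : v x * ∑ i ∈ S, w i ≤ (∑ i ∈ S, v i) * w x := by
    rw [sum_mul, mul_sum]; exact sum_le_sum hxS
  rw [div_lt_iff₀' hk0] at hxW
  have hrest : ∑ j ∈ I \ S, w j ≤ (k - 1) * ∑ i ∈ S, w i + k * w x := by linarith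
  have : (∑ j ∈ I \ S, v j) * w x ≤ ((k - 1) * ∑ i ∈ S, v i + k * M) * w x := by
    calc (∑ j ∈ I \ S, v j) * w x ≤ v x * ∑ j ∈ I \ S, w j := hout
      _ ≤ v x * ((k - 1) * ∑ i ∈ S, w i + k * w x) := mul_le_mul_of_nonneg_left hrest hvx.1
      _ = (k - 1) * (v x * ∑ i ∈ S, w i) + k * v x * w x := by ring
      _ ≤ (k - 1) * ((∑ i ∈ S, v i) * w x) + k * M * w x := by gcongr; exact hvx.2
      _ = ((k - 1) * ∑ i ∈ S, v i + k * M) * w x := by ring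
  have := le_of_mul_le_mul_right this hwx
  linarith

end Knapsack

noncomputable def logIncrement (b : ℕ) : ℝ := Real.log (b + 2) - Real.log (b + 1)

theorem logIncrement_antitone : Antitone logIncrement := by
  intro c b hcb
  have hcb' : (c : ℝ) ≤ b := by exact_mod_cast hcb
  have key : Real.log (((b : ℝ) + 2) * (c + 1)) ≤ Real.log ((c + 2) * (b + 1)) :=
    Real.log_le_log (by positivity) (by nlinarith)
  rw [Real.log_mul (by positivity) (by positivity),
    Real.log_mul (by positivity) (by positivity)] at key
  unfold logIncrement
  linarith

theorem logIncrement_nonneg (b : ℕ) : 0 ≤ logIncrement b :=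
  sub_nonneg.mpr (Real.log_le_log (by positivity) (by linarith))

theorem logIncrement_le_log_two (b : ℕ) : logIncrement b ≤ Real.log 2 := by
  simpa [logIncrement] using logIncrement_antitone (Nat.zero_le b)

theorem sum_range_logIncrement (m : ℕ) :
    ∑ b ∈ range m, logIncrement b = Real.log (m + 1) := by
  induction m with
  | zero => simp
  | succ m ih =>
    rw [sum_range_succ, ih, logIncrement]
    push_cast
    ring_nf

theorem sum_logIncrement_le (B : Finset ℕ) :
    ∑ b ∈ B, logIncrement b ≤ Real.log (#B + 1) := by
  induction B using Finset.induction_on_max with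
  | empty => simp
  | insert a s ha ih =>
    have has : a ∉ s := fun h => lt_irrefl a (ha a h)
    have hcard : #s ≤ a := by
      simpa using card_le_card (fun x hx => mem_range.mpr (ha x hx) : s ⊆ range a)
    rw [sum_insert has, card_insert_of_notMem has, ← sum_range_logIncrement, sum_range_succ,
      sum_range_logIncrement]
    linarith [logIncrement_antitone hcard]

theorem Nat.factorization_prod_of_prime {ι : Type*} {S : Finset ι} {f : ι → ℕ}
    (hS : ∀ i ∈ S, (f i).Prime) (q : ℕ) :
    (∏ i ∈ S, f i).factorization q = #{i ∈ S | f i = q} := by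
  rw [Nat.factorization_prod fun i hi => (hS i hi).ne_zero, Finsupp.finsetSum_apply,
    card_filter]
  refine sum_congr rfl fun i hi => ?_
  rw [(hS i hi).factorization, Finsupp.single_apply]

theorem sum_logIncrement_le_log_card_divisors_prod (S : Finset (Σ _ : ℕ, ℕ))
    (hS : ∀ i ∈ S, i.1.Prime) :
    ∑ i ∈ S, logIncrement i.2 ≤ Real.log #(∏ i ∈ S, i.1).divisors := by
  set d := ∏ i ∈ S, i.1
  have hd : d ≠ 0 := prod_ne_zero_iff.mpr fun i hi => (hS i hi).ne_zero
  have hmaps : ∀ i ∈ S, i.1 ∈ d.primeFactors := fun i hi =>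
    Nat.mem_primeFactors.mpr ⟨hS i hi, dvd_prod_of_mem _ hi, hd⟩
  rw [Nat.card_divisors hd, Nat.cast_prod, Real.log_prod fun q _ => by positivity,
    ← sum_fiberwise_of_maps_to hmaps]
  refine sum_le_sum fun q _ => ?_
  have hinj : Set.InjOn Sigma.snd (S.filter (·.1 = q) : Set (Σ _ : ℕ, ℕ)) := by
    rintro ⟨p, b⟩ hi ⟨p', b'⟩ hj (rfl : b = b')
    obtain rfl : p = p' := (mem_filter.mp hi).2.trans (mem_filter.mp hj).2.symm
    rfl
  rw [Nat.factorization_prod_of_prime hS, ← card_image_of_injOn hinj,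
    ← sum_image (f := logIncrement) hinj]
  exact_mod_cast sum_logIncrement_le _

theorem Nat.prod_fst_sigma_range_factorization {n : ℕ} (hn : n ≠ 0) :
    ∏ i ∈ n.primeFactors.sigma (fun p => range (n.factorization p)), i.1 = n := by
  rw [prod_sigma]
  simp_rw [prod_const, card_range]
  exact (Nat.prod_primeFactors_pow_factorization hn).symm

theorem Nat.log_card_divisors_eq_sum_logIncrement {n : ℕ} (hn : n ≠ 0) :
    Real.log #n.divisors =
      ∑ i ∈ n.primeFactors.sigma (fun p => range (n.factorization p)), logIncrement i.2 := by
  rw [Nat.card_divisors hn, Nat.cast_prod, Real.log_prod fun p _ => by positivity, sum_sigma]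
  refine sum_congr rfl fun p _ => ?_
  rw [sum_range_logIncrement]
  push_cast
  rfl

theorem Nat.exists_dvd_mul_log_le_and_log_card_divisors_le {n : ℕ} (hn : n ≠ 0) {k : ℝ}
    (hk : 1 ≤ k) : ∃ d, d ∣ n ∧ k * Real.log d ≤ Real.log n ∧
      Real.log #n.divisors ≤ k * (Real.log #d.divisors + Real.log 2) := by
  set I := n.primeFactors.sigma fun p => range (n.factorization p)
  have hI : ∀ i ∈ I, i.1.Prime := fun i hi =>
    Nat.prime_of_mem_primeFactors (mem_sigma.mp hi).1
  have hlog_prod : ∀ T ⊆ I, Real.log (∏ i ∈ T, i.1 : ℕ) = ∑ i ∈ T, Real.log i.1 :=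
    fun T hT => by
      rw [Nat.cast_prod, Real.log_prod fun i hi => by exact_mod_cast (hI i (hT hi)).ne_zero]
  obtain ⟨S, hSI, hSw, hSv⟩ := exists_subset_mul_sum_le_and_sum_le
    (fun i => logIncrement i.2) (fun i => Real.log i.1) I
    (fun i hi => Real.log_pos (by exact_mod_cast (hI i hi).one_lt))
    (Real.log_nonneg one_le_two)
    (fun i _ => ⟨logIncrement_nonneg _, logIncrement_le_log_two _⟩) hk
  refine ⟨∏ i ∈ S, i.1, ?_, ?_, ?_⟩
  · exact Nat.prod_fst_sigma_range_factorization hn ▸ prod_dvd_prod_of_subset _ _ _ hSI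
  · rwa [hlog_prod S hSI, ← Nat.prod_fst_sigma_range_factorization hn, hlog_prod I subset_rfl]
  · calc Real.log #n.divisors = ∑ i ∈ I, logIncrement i.2 :=
          Nat.log_card_divisors_eq_sum_logIncrement hn
      _ ≤ k * (∑ i ∈ S, logIncrement i.2 + Real.log 2) := hSv
      _ ≤ k * (Real.log #(∏ i ∈ S, i.1).divisors + Real.log 2) := by
          gcongr
          exact sum_logIncrement_le_log_card_divisors_prod S fun i hi => hI i (hSI hi)

/-- For every positive integer `n`, `τ(n) ≪ ∑_{d ∣ n, d ≤ n^(1/3)} τ(d)^3`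
with an absolute implied constant. -/
theorem tau_le_sum_tau_cube_small_divisors :
    ∃ C : ℝ, 0 < C ∧ ∀ n : ℕ, 0 < n →
      (n.divisors.card : ℝ) ≤
        C * ∑ d ∈ n.divisors.filter (fun d : ℕ => (d : ℝ) ≤ (n : ℝ) ^ ((1 : ℝ) / 3)),
          (d.divisors.card : ℝ) ^ 3 := by
  refine ⟨8, by norm_num, fun n hn => ?_⟩
  obtain ⟨d, hdn, hd_log, hτ_log⟩ :=
    Nat.exists_dvd_mul_log_le_and_log_card_divisors_le hn.ne' (k := 3) (by norm_num)
  have hd : 0 < d := Nat.pos_of_dvd_of_pos hdn hn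
  have hτd : (0 : ℝ) < #d.divisors := by
    exact_mod_cast (Nat.nonempty_divisors.mpr hd.ne').card_pos
  have hd_small : (d : ℝ) ≤ (n : ℝ) ^ ((1 : ℝ) / 3) := by
    rw [← Real.log_le_log_iff (by positivity) (by positivity), Real.log_rpow (by positivity)]
    linarith
  have hτ : (#n.divisors : ℝ) ≤ 8 * (#d.divisors : ℝ) ^ 3 := by
    rw [← Real.log_le_log_iff (by exact_mod_cast (Nat.nonempty_divisors.mpr hn.ne').card_pos)
      (by positivity), Real.log_mul (by norm_num) (by positivity), Real.log_pow,
      show (8 : ℝ) = 2 ^ 3 by norm_num, Real.log_pow]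
    push_cast
    linarith
  refine hτ.trans (mul_le_mul_of_nonneg_left ?_ (by norm_num))
  exact single_le_sum (f := fun e : ℕ => (#e.divisors : ℝ) ^ 3) (fun e _ => by positivity)
    (mem_filter.mpr ⟨Nat.mem_divisors.mpr ⟨hdn, hn.ne'⟩, hd_small⟩)
end

section
/- Let α ∈ (1/2, 1] and q a positive integer, and set g_q(β) = ∏_{p|q}(1 − p^{−β}) for β ∈ [α,1]. Then |g_q(α) − g_q(1)| ≪ (1 − α)·log q, with an implied constant depending only on a lower bound for α. -/
open Finset

/-- `g_q(β) = ∏_{p ∣ q} (1 − p^{−β})`. -/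
noncomputable def gFactor (q : ℕ) (β : ℝ) : ℝ :=
  ∏ p ∈ q.primeFactors, (1 - (p : ℝ) ^ (-β))

lemma prod_diff_le {ι : Type*} [DecidableEq ι] (s : Finset ι) (f g : ι → ℝ)
    (hf : ∀ i ∈ s, f i ∈ Set.Icc (0:ℝ) 1) (hg : ∀ i ∈ s, g i ∈ Set.Icc (0:ℝ) 1) :
    |∏ i ∈ s, f i - ∏ i ∈ s, g i| ≤ ∑ i ∈ s, |f i - g i| := by
  induction s using Finset.induction with
  | empty => simp
  | @insert a s ha ih =>
    simp only [Finset.prod_insert ha, Finset.sum_insert ha]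
    have hf' := fun i hi => hf i (Finset.mem_insert_of_mem hi)
    have hg' := fun i hi => hg i (Finset.mem_insert_of_mem hi)
    have hfa := hf a (Finset.mem_insert_self a s)
    have hga := hg a (Finset.mem_insert_self a s)
    have hpf : ∏ i ∈ s, f i ∈ Set.Icc (0:ℝ) 1 := by
      constructor
      · exact Finset.prod_nonneg fun i hi => (hf' i hi).1
      · exact Finset.prod_le_one (fun i hi => (hf' i hi).1) (fun i hi => (hf' i hi).2)
    have key : f a * ∏ i ∈ s, f i - g a * ∏ i ∈ s, g i
        = (f a - g a) * ∏ i ∈ s, f i + g a * (∏ i ∈ s, f i - ∏ i ∈ s, g i) := by ring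
    rw [key]
    calc |(f a - g a) * ∏ i ∈ s, f i + g a * (∏ i ∈ s, f i - ∏ i ∈ s, g i)|
        ≤ |(f a - g a) * ∏ i ∈ s, f i| + |g a * (∏ i ∈ s, f i - ∏ i ∈ s, g i)| := abs_add_le _ _
      _ ≤ |f a - g a| + ∑ i ∈ s, |f i - g i| := by
          rw [abs_mul, abs_mul]
          gcongr
          · rw [abs_of_nonneg hpf.1]; nlinarith [abs_nonneg (f a - g a), hpf.2]
          · calc |g a| * |∏ i ∈ s, f i - ∏ i ∈ s, g i| ≤ 1 * |∏ i ∈ s, f i - ∏ i ∈ s, g i| := by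
                  gcongr; rw [abs_of_nonneg hga.1]; exact hga.2
            _ = _ := one_mul _
            _ ≤ _ := ih hf' hg'

lemma single_bound (p : ℕ) (hp : 2 ≤ p) (α : ℝ) (hα0 : 0 ≤ α) (hα1 : α ≤ 1) :
    |(p : ℝ) ^ (-α) - (p : ℝ) ^ (-(1:ℝ))| ≤ (1 - α) * Real.log p := by
  have hp0 : (0:ℝ) < p := by exact_mod_cast Nat.lt_of_lt_of_le two_pos hp
  have hp1 : (1:ℝ) ≤ p := by exact_mod_cast Nat.one_le_of_lt hp
  set x := (1 - α) * Real.log p with hx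
  have hx0 : 0 ≤ x := mul_nonneg (by linarith) (Real.log_nonneg hp1)
  have hle : (p : ℝ) ^ (-(1:ℝ)) ≤ (p : ℝ) ^ (-α) :=
    Real.rpow_le_rpow_of_exponent_le hp1 (by linarith)
  rw [abs_of_nonneg (by linarith)]
  have hsplit : (p : ℝ) ^ (-α) - (p : ℝ) ^ (-(1:ℝ))
      = (p : ℝ) ^ (-α) * (1 - Real.exp (-x)) := by
    rw [mul_sub, mul_one]
    congr 1
    rw [hx, show -((1 - α) * Real.log ↑p) = Real.log ↑p * (α - 1) by ring,
      ← Real.rpow_def_of_pos hp0, ← Real.rpow_add hp0]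
    ring_nf
  rw [hsplit]
  have h1 : (p : ℝ) ^ (-α) ≤ 1 :=
    Real.rpow_le_one_of_one_le_of_nonpos hp1 (by linarith)
  have h2 : 1 - Real.exp (-x) ≤ x := by
    have := Real.add_one_le_exp (-x); linarith
  have h3 : 0 ≤ 1 - Real.exp (-x) := by
    have : Real.exp (-x) ≤ 1 := Real.exp_le_one_iff.mpr (by linarith)
    linarith
  calc (p : ℝ) ^ (-α) * (1 - Real.exp (-x)) ≤ 1 * x := by
        apply mul_le_mul h1 h2 h3 one_pos.le
    _ = x := one_mul x

/-- For `α ∈ (1/2, 1]` and `q ≥ 1`, `|g_q(α) − g_q(1)| ≪ (1−α) log q`,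
with an implied constant depending only on the lower bound `1/2` for `α`. -/
theorem abs_gFactor_sub_le :
    ∃ C : ℝ, 0 < C ∧ ∀ α : ℝ, 1 / 2 < α → α ≤ 1 → ∀ q : ℕ, 0 < q →
      |gFactor q α - gFactor q 1| ≤ C * (1 - α) * Real.log q := by
  refine ⟨1, one_pos, fun α hα2 hα1 q hq => ?_⟩
  have hα0 : (0:ℝ) ≤ α := by linarith
  have hmem : ∀ β : ℝ, 0 ≤ β → ∀ p ∈ q.primeFactors,
      (1 - (p : ℝ) ^ (-β)) ∈ Set.Icc (0:ℝ) 1 := by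
    intro β hβ p hp
    have hp2 : 2 ≤ p := (Nat.prime_of_mem_primeFactors hp).two_le
    have hp1 : (1:ℝ) ≤ p := by exact_mod_cast Nat.one_le_of_lt hp2
    have hpos : (0:ℝ) < (p:ℝ) ^ (-β) := Real.rpow_pos_of_pos (by linarith) _
    have hle1 : (p : ℝ) ^ (-β) ≤ 1 :=
      Real.rpow_le_one_of_one_le_of_nonpos hp1 (by linarith)
    constructor <;> linarith
  have step1 : |gFactor q α - gFactor q 1|
      ≤ ∑ p ∈ q.primeFactors, |(1 - (p : ℝ) ^ (-α)) - (1 - (p : ℝ) ^ (-(1:ℝ)))| :=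
    prod_diff_le _ _ _ (hmem α hα0) (hmem 1 one_pos.le)
  have step2 : ∑ p ∈ q.primeFactors, |(1 - (p : ℝ) ^ (-α)) - (1 - (p : ℝ) ^ (-(1:ℝ)))|
      ≤ ∑ p ∈ q.primeFactors, (1 - α) * Real.log p := by
    apply Finset.sum_le_sum
    intro p hp
    have hp2 : 2 ≤ p := (Nat.prime_of_mem_primeFactors hp).two_le
    have := single_bound p hp2 α hα0 hα1
    calc |(1 - (p : ℝ) ^ (-α)) - (1 - (p : ℝ) ^ (-(1:ℝ)))|
        = |(p : ℝ) ^ (-α) - (p : ℝ) ^ (-(1:ℝ))| := by rw [abs_sub_comm]; ring_nf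
      _ ≤ (1 - α) * Real.log p := this
  have step3 : ∑ p ∈ q.primeFactors, Real.log p ≤ Real.log q := by
    have hdvd : (∏ p ∈ q.primeFactors, p) ∣ q := Nat.prod_primeFactors_dvd q
    have hle : (∏ p ∈ q.primeFactors, p) ≤ q := Nat.le_of_dvd hq hdvd
    have hlog : Real.log (∏ p ∈ q.primeFactors, (p:ℝ)) = ∑ p ∈ q.primeFactors, Real.log p := by
      apply Real.log_prod
      intro p hp
      exact_mod_cast (Nat.prime_of_mem_primeFactors hp).pos.ne'
    rw [← hlog]
    apply Real.log_le_log
    · exact Finset.prod_pos fun p hp =>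
        by exact_mod_cast (Nat.prime_of_mem_primeFactors hp).pos
    · rw [← Nat.cast_prod]
      exact_mod_cast hle
  calc |gFactor q α - gFactor q 1|
      ≤ ∑ p ∈ q.primeFactors, (1 - α) * Real.log p := step1.trans step2
    _ = (1 - α) * ∑ p ∈ q.primeFactors, Real.log p := by rw [Finset.mul_sum]
    _ ≤ (1 - α) * Real.log q := by
        apply mul_le_mul_of_nonneg_left step3 (by linarith)
    _ = 1 * (1 - α) * Real.log q := by ring
end

section
/- Let f : ℕ → ℂ and λ = f ∗ μ its Möbius transform, and assume ∑_{q≥1} |λ(q)|/q converges. Then the average of f over integers up to x satisfies (1/x)∑_{n ≤ x} f(n) → ∑_{q≥1} λ(q)/q as x → ∞, provided additionally ∑_{q≥1}|λ(q)| q^{β−1} < ∞ for some β > 0. -/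
/-! Möbius inversion gives `f = λ ∗ 1`, so `∑_{n ≤ x} f n = ∑_{q ≤ x} λ q ⌊x/q⌋`. After dividing
by `x`, the `q`-th term tends to `λ q / q` and is bounded by `‖λ q‖ / q`, so dominated convergence
for series (Tannery's theorem) gives the limit. -/

open Finset Filter ArithmeticFunction

theorem sum_divisors_eq_of_eq_sum_mul_moebius {R : Type*} [CommRing R] {f lam : ℕ → R}
    (hlam : ∀ q : ℕ, lam q = ∑ d ∈ q.divisors, f d * ((moebius (q / d) : ℤ) : R)) :
    ∀ n > 0, ∑ q ∈ n.divisors, lam q = f n := by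
  rw [sum_eq_iff_sum_mul_moebius_eq]
  intro n _
  rw [Nat.sum_divisorsAntidiagonal' (f := fun a b => ((moebius a : ℤ) : R) * f b), hlam]
  exact sum_congr rfl fun d _ => mul_comm _ _

theorem sum_Icc_sum_divisors_eq {M : Type*} [AddCommMonoid M] (g : ℕ → M) (N : ℕ) :
    ∑ n ∈ Icc 1 N, ∑ d ∈ n.divisors, g d = ∑ d ∈ Icc 1 N, (N / d) • g d := by
  rw [sum_comm' (t' := Icc 1 N) (s' := fun d => {n ∈ Ioc 0 N | d ∣ n})]
  · exact sum_congr rfl fun d _ => by rw [sum_const, Nat.Ioc_filter_dvd_card_eq_div]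
  · intro n d
    simp only [mem_Icc, Nat.mem_divisors, mem_filter, mem_Ioc]
    constructor
    · rintro ⟨hn, hdn, -⟩
      have := Nat.pos_of_dvd_of_pos hdn (by omega)
      have := Nat.le_of_dvd (by omega) hdn
      omega
    · rintro ⟨⟨hn, hdn⟩, -⟩
      exact ⟨by omega, hdn, by omega⟩

theorem floor_div_div_le_one_div (x : ℝ) (q : ℕ) : ((⌊x⌋₊ / q : ℕ) : ℝ) / x ≤ 1 / q := by
  rw [← Nat.floor_div_natCast]
  rcases le_or_gt x 0 with hx | hx
  · simp [Nat.floor_of_nonpos (div_nonpos_of_nonpos_of_nonneg hx q.cast_nonneg)]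
  · rw [div_le_iff₀ hx, one_div_mul_eq_div]
    exact Nat.floor_le (by positivity)

theorem tendsto_floor_div_div_atTop (q : ℕ) :
    Tendsto (fun x : ℝ => ((⌊x⌋₊ / q : ℕ) : ℝ) / x) atTop (nhds (1 / q)) := by
  rcases Nat.eq_zero_or_pos q with rfl | hq
  · simp
  have hq' : (0 : ℝ) < q := by exact_mod_cast hq
  have h := (tendsto_nat_floor_div_atTop.comp (tendsto_id.atTop_div_const hq')).mul_const
    (1 / (q : ℝ))
  rw [one_mul] at h
  refine h.congr fun x => ?_
  simp only [Function.comp_apply, id, ← Nat.floor_div_natCast]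
  field_simp

theorem tendsto_tsum_floor_div_div_smul {E : Type*} [NormedAddCommGroup E] [NormedSpace ℝ E]
    [CompleteSpace E] {a : ℕ → E} (ha : Summable fun q : ℕ => ‖a q‖ / q) :
    Tendsto (fun x : ℝ => ∑' q : ℕ, (((⌊x⌋₊ / q : ℕ) : ℝ) / x) • a q) atTop
      (nhds (∑' q : ℕ, (1 / q : ℝ) • a q)) := by
  refine tendsto_tsum_of_dominated_convergence ha
    (fun q => (tendsto_floor_div_div_atTop q).smul_const (a q)) ?_
  filter_upwards [eventually_ge_atTop 0] with x hx q
  calc ‖(((⌊x⌋₊ / q : ℕ) : ℝ) / x) • a q‖ = (((⌊x⌋₊ / q : ℕ) : ℝ) / x) * ‖a q‖ := by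
        rw [norm_smul, Real.norm_of_nonneg (by positivity)]
    _ ≤ 1 / q * ‖a q‖ :=
        mul_le_mul_of_nonneg_right (floor_div_div_le_one_div x q) (norm_nonneg _)
    _ = ‖a q‖ / q := one_div_mul_eq_div _ _

theorem tsum_div_div_smul_eq {E : Type*} [AddCommGroup E] [Module ℝ E] [TopologicalSpace E]
    (a : ℕ → E) (N : ℕ) (c : ℝ) :
    ∑' q : ℕ, (((N / q : ℕ) : ℝ) / c) • a q = c⁻¹ • ∑ q ∈ Icc 1 N, (N / q) • a q := by
  rw [tsum_eq_sum (s := Icc 1 N), smul_sum]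
  · refine sum_congr rfl fun q _ => ?_
    rw [div_eq_inv_mul, mul_smul, Nat.cast_smul_eq_nsmul]
  · intro q hq
    rw [mem_Icc, not_and_or, not_le, not_le, Nat.lt_one_iff] at hq
    rcases hq with rfl | hq
    · simp
    · simp [Nat.div_eq_of_lt hq]

theorem mean_value_of_moebius_transform_general (f : ℕ → ℂ) (lam : ℕ → ℂ)
    (hlam : ∀ q : ℕ, lam q = ∑ d ∈ q.divisors, f d * ((moebius (q / d) : ℤ) : ℂ))
    (hsum : Summable fun q : ℕ => ‖lam q‖ / q) :
    Tendsto (fun x : ℝ => (∑ n ∈ Finset.Icc 1 ⌊x⌋₊, f n) / (x : ℂ))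
      atTop (nhds (∑' q : ℕ, lam q / q)) := by
  have hinv := sum_divisors_eq_of_eq_sum_mul_moebius hlam
  have hlim : ∑' q : ℕ, (1 / q : ℝ) • lam q = ∑' q : ℕ, lam q / q :=
    tsum_congr fun q => by rw [Complex.real_smul]; push_cast; ring
  rw [← hlim]
  refine (tendsto_tsum_floor_div_div_smul hsum).congr fun x => ?_
  rw [tsum_div_div_smul_eq, ← sum_Icc_sum_divisors_eq,
    sum_congr rfl fun n hn => hinv n (mem_Icc.1 hn).1, Complex.real_smul]
  push_cast
  ring

/-- Let `f : ℕ → ℂ` and `λ = f ∗ μ`. If `∑ |λ(q)|/q < ∞` and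
`∑ |λ(q)| q^{β−1} < ∞` for some `β > 0`, then
`(1/x) ∑_{n ≤ x} f(n) → ∑_{q ≥ 1} λ(q)/q` as `x → ∞`. -/
theorem mean_value_of_moebius_transform (f : ℕ → ℂ) (lam : ℕ → ℂ)
    (hlam : ∀ q : ℕ, lam q = ∑ d ∈ q.divisors, f d * ((moebius (q / d) : ℤ) : ℂ))
    (hsum : Summable fun q : ℕ => ‖lam q‖ / q)
    (hβ : ∃ β : ℝ, 0 < β ∧ Summable fun q : ℕ => ‖lam q‖ * (q : ℝ) ^ (β - 1)) :
    Tendsto (fun x : ℝ => (∑ n ∈ Finset.Icc 1 ⌊x⌋₊, f n) / (x : ℂ))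
      atTop (nhds (∑' q : ℕ, lam q / q)) :=
  mean_value_of_moebius_transform_general f lam hlam hsum
end

section
/- For Y ≥ 3 and x ≥ Y, ∑_{d > x^{1/3}, P(d) ≤ Y, d squarefree} 1/φ(d) ≪ (log Y) · e^{−(log x)/(6 log Y)}, with an absolute implied constant. -/
set_option maxHeartbeats 1000000

open Finset Nat

lemma nu_ge (p n : ℕ) (hp : p.Prime) (hpn : p ≤ n) : n / p ≤ (n !).factorization p := by
  rw [← Nat.Prime.pow_dvd_iff_le_factorization hp n.factorial_ne_zero,
    Nat.Prime.pow_dvd_factorial_iff hp (Nat.lt_succ_self _)]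
  have h1 : 1 ∈ Finset.Ico 1 (Nat.log p n + 1) := by
    simp [Nat.succ_le_iff, Nat.log_pos hp.one_lt hpn]
  simpa using Finset.single_le_sum (f := fun i => n / p ^ i) (fun i _ => Nat.zero_le _) h1

lemma log_factorial (n : ℕ) :
    Real.log (n !) = ∑ p ∈ (n !).primeFactors, ((n !).factorization p : ℝ) * Real.log p := by
  conv_lhs => rw [← Nat.factorization_prod_pow_eq_self n.factorial_ne_zero]
  rw [Finsupp.prod, Nat.cast_prod, Real.log_prod]
  · rw [Nat.support_factorization]
    refine Finset.sum_congr rfl fun p hp => ?_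
    rw [Nat.cast_pow, Real.log_pow]
  · intro p hp
    have hp' : p.Prime := Nat.prime_of_mem_primeFactors (by rwa [← Nat.support_factorization])
    have : (p:ℝ) ≠ 0 := Nat.cast_ne_zero.mpr hp'.ne_zero
    simp [Nat.cast_pow, pow_ne_zero, this]

lemma theta_le (n : ℕ) :
    ∑ p ∈ (Finset.range (n+1)).filter Nat.Prime, Real.log p ≤ n * Real.log 4 := by
  have h1 : ∏ p ∈ (Finset.range (n+1)).filter Nat.Prime, p = primorial n := rfl
  have hpos : (0:ℝ) < ∏ p ∈ (Finset.range (n+1)).filter Nat.Prime, (p:ℝ) := by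
    apply Finset.prod_pos
    intro p hp
    simp only [Finset.mem_filter] at hp
    exact_mod_cast hp.2.pos
  calc ∑ p ∈ (Finset.range (n+1)).filter Nat.Prime, Real.log p
      = Real.log (∏ p ∈ (Finset.range (n+1)).filter Nat.Prime, (p:ℝ)) := by
        rw [Real.log_prod]
        intro p hp
        simp only [Finset.mem_filter] at hp
        exact Nat.cast_ne_zero.mpr hp.2.ne_zero
    _ ≤ Real.log ((4:ℝ)^n) := by
        apply Real.log_le_log hpos
        rw [← Nat.cast_prod, h1]
        exact_mod_cast primorial_le_4_pow n
    _ = n * Real.log 4 := by rw [Real.log_pow]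

lemma mertens1 (n : ℕ) (hn : 2 ≤ n) :
    ∑ p ∈ (Finset.range (n+1)).filter Nat.Prime, Real.log p / p ≤ Real.log n + Real.log 4 := by
  set P := (Finset.range (n+1)).filter Nat.Prime with hP
  have hnR : (0:ℝ) < n := by exact_mod_cast Nat.lt_of_lt_of_le Nat.zero_lt_two hn
  have hmem : ∀ p ∈ P, p.Prime ∧ p ≤ n := by
    intro p hp
    simp only [hP, Finset.mem_filter, Finset.mem_range] at hp
    exact ⟨hp.2, by omega⟩
  have hsub : P ⊆ (n !).primeFactors := by
    intro p hp
    obtain ⟨hp1, hp2⟩ := hmem p hp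
    exact Nat.mem_primeFactors.mpr ⟨hp1, Nat.dvd_factorial hp1.pos hp2, n.factorial_ne_zero⟩
  have step1 : ∑ p ∈ P, ((n / p : ℕ) : ℝ) * Real.log p ≤ Real.log (n !) := by
    rw [log_factorial]
    refine le_trans (Finset.sum_le_sum fun p hp => ?_) (Finset.sum_le_sum_of_subset_of_nonneg hsub
      fun p hp _ => ?_)
    · obtain ⟨hp1, hp2⟩ := hmem p hp
      have := nu_ge p n hp1 hp2
      have hlp : (0:ℝ) ≤ Real.log p := Real.log_natCast_nonneg p
      exact mul_le_mul_of_nonneg_right (by exact_mod_cast this) hlp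
    · exact mul_nonneg (by positivity) (Real.log_natCast_nonneg p)
  have logfact : Real.log (n !) ≤ n * Real.log n := by
    calc Real.log (n !) ≤ Real.log ((n:ℝ)^n) := by
          apply Real.log_le_log (by exact_mod_cast n.factorial_pos)
          exact_mod_cast n.factorial_le_pow
      _ = n * Real.log n := Real.log_pow n n
  have main : (n:ℝ) * ∑ p ∈ P, Real.log p / p ≤ n * Real.log n + n * Real.log 4 := by
    rw [Finset.mul_sum]
    have hterm : ∀ p ∈ P, (n:ℝ) * (Real.log p / p) ≤ ((n / p : ℕ) : ℝ) * Real.log p + Real.log p := by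
      intro p hp
      obtain ⟨hp1, hp2⟩ := hmem p hp
      have hpR : (0:ℝ) < p := by exact_mod_cast hp1.pos
      have hfloor : (n:ℝ) / p ≤ ((n / p : ℕ) : ℝ) + 1 := by
        have h1 : n < (n / p + 1) * p := by
          have h2 := Nat.div_add_mod n p
          have h3 := Nat.mod_lt n hp1.pos
          have : (n / p + 1) * p = p * (n/p) + p := by ring
          omega
        have : (n:ℝ) < (((n / p : ℕ) : ℝ) + 1) * p := by exact_mod_cast h1
        rw [div_le_iff₀ hpR]
        linarith
      have hlp : (0:ℝ) ≤ Real.log p := Real.log_natCast_nonneg p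
      calc (n:ℝ) * (Real.log p / p) = ((n:ℝ)/p) * Real.log p := by ring
        _ ≤ (((n / p : ℕ) : ℝ) + 1) * Real.log p := mul_le_mul_of_nonneg_right hfloor hlp
        _ = ((n / p : ℕ) : ℝ) * Real.log p + Real.log p := by ring
    calc ∑ p ∈ P, (n:ℝ) * (Real.log p / p)
        ≤ ∑ p ∈ P, (((n / p : ℕ) : ℝ) * Real.log p + Real.log p) := Finset.sum_le_sum hterm
      _ = ∑ p ∈ P, ((n / p : ℕ) : ℝ) * Real.log p + ∑ p ∈ P, Real.log p := Finset.sum_add_distrib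
      _ ≤ n * Real.log n + n * Real.log 4 := by
          have h4 := theta_le n
          linarith
  calc ∑ p ∈ P, Real.log p / p = (n:ℝ) * (∑ p ∈ P, Real.log p / p) / n := by
        field_simp
    _ ≤ (n * Real.log n + n * Real.log 4) / n := by gcongr
    _ = Real.log n + Real.log 4 := by field_simp

noncomputable def c₂ : ℝ := 1 + 2*Real.log 4/Real.log 2 - Real.log (Real.log 2)

lemma telescope_Ico (f : ℕ → ℝ) {a b : ℕ} (hab : a ≤ b) :
    ∑ i ∈ Finset.Ico a b, (f (i+1) - f i) = f b - f a := by
  have h0 : ∀ k : ℕ, ∑ i ∈ Finset.Ico 0 k, (f (i+1) - f i) = f k - f 0 := by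
    intro k
    rw [Nat.Ico_zero_eq_range]
    exact Finset.sum_range_sub (f := f) k
  have := Finset.sum_Ico_consecutive (fun i => f (i+1) - f i) (Nat.zero_le a) hab
  rw [h0 a, h0 b] at this
  linarith

lemma mertens2 (n : ℕ) (hn : 3 ≤ n) :
    ∑ p ∈ (Finset.range (n+1)).filter Nat.Prime, (1:ℝ)/p
      ≤ Real.log (Real.log n) + c₂ := by
  classical
  set a : ℕ → ℝ := fun m => if m.Prime then Real.log m / m else 0 with ha
  set b : ℕ → ℝ := fun m => 1 / Real.log m with hb
  set G : ℕ → ℝ := fun k => ∑ j ∈ Finset.range k, a j with hG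
  have hlog2 : (0:ℝ) < Real.log 2 := Real.log_pos (by norm_num)
  have hlog4 : (0:ℝ) < Real.log 4 := Real.log_pos (by norm_num)
  have hlogi : ∀ i : ℕ, 2 ≤ i → (0:ℝ) < Real.log i := fun i hi =>
    Real.log_pos (by exact_mod_cast Nat.lt_of_lt_of_le Nat.one_lt_two hi)
  have hlog2le : ∀ i : ℕ, 2 ≤ i → Real.log 2 ≤ Real.log i := fun i hi => by
    apply Real.log_le_log (by norm_num); exact_mod_cast hi
  have hGle : ∀ i : ℕ, 2 ≤ i → G (i+1) ≤ Real.log i + Real.log 4 := by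
    intro i hi
    have : G (i+1) = ∑ p ∈ (Finset.range (i+1)).filter Nat.Prime, Real.log p / p := by
      rw [hG, Finset.sum_filter]
    rw [this]
    exact mertens1 i hi
  have hLHS : ∑ p ∈ (Finset.range (n+1)).filter Nat.Prime, (1:ℝ)/p
      = ∑ m ∈ Finset.range (n+1), b m • a m := by
    rw [Finset.sum_filter]
    refine Finset.sum_congr rfl fun m _ => ?_
    by_cases hm : m.Prime
    · have hm2 : (0:ℝ) < Real.log m := hlogi m hm.two_le
      simp only [ha, hb, hm, if_true, smul_eq_mul]
      field_simp
    · simp [ha, hb, hm]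
  rw [hLHS, Finset.sum_range_by_parts b a (n+1)]
  simp only [Nat.add_sub_cancel, smul_eq_mul]
  have hbn : b n * G (n+1) ≤ 1 + Real.log 4 / Real.log 2 := by
    have hln : (0:ℝ) < Real.log n := hlogi n (by omega)
    have h1 : b n * G (n+1) ≤ (1/Real.log n) * (Real.log n + Real.log 4) :=
      mul_le_mul_of_nonneg_left (hGle n (by omega)) (by positivity)
    have h2 : (1/Real.log n) * (Real.log n + Real.log 4) = 1 + Real.log 4 / Real.log n := by
      field_simp
    have h3 : Real.log 4 / Real.log n ≤ Real.log 4 / Real.log 2 :=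
      div_le_div_of_nonneg_left (by positivity) hlog2 (hlog2le n (by omega))
    linarith
  set F : ℕ → ℝ := fun i => Real.log (Real.log i) - Real.log 4 / Real.log i with hF
  have key : ∑ i ∈ Finset.range n, (b i - b (i+1)) * G (i+1) ≤ F n - F 2 := by
    have hsub : Finset.Ico 2 n ⊆ Finset.range n := by
      intro i hi
      simp only [Finset.mem_Ico] at hi
      simp only [Finset.mem_range]
      omega
    have hzero : ∀ i ∈ Finset.range n, i ∉ Finset.Ico 2 n → (b i - b (i+1)) * G (i+1) = 0 := by
      intro i hi hni
      simp only [Finset.mem_range] at hi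
      simp only [Finset.mem_Ico, not_and, not_lt] at hni
      have hi2 : i < 2 := by by_contra h; exact absurd (hni (by omega)) (by omega)
      interval_cases i
      · simp [hb, Real.log_zero, Real.log_one]
      · have : G 2 = 0 := by
          show ∑ j ∈ Finset.range 2, a j = 0
          simp [Finset.sum_range_succ, ha, Nat.not_prime_zero, Nat.not_prime_one]
        rw [this, mul_zero]
    rw [← Finset.sum_subset hsub hzero]
    have hterm : ∀ i ∈ Finset.Ico 2 n, (b i - b (i+1)) * G (i+1) ≤ F (i+1) - F i := by
      intro i hi
      simp only [Finset.mem_Ico] at hi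
      obtain ⟨hi2, _⟩ := hi
      have hu : (0:ℝ) < Real.log i := hlogi i hi2
      have hv : (0:ℝ) < Real.log (i+1) := by
        have := hlogi (i+1) (by omega)
        exact_mod_cast this
      have huv : Real.log i ≤ Real.log (i+1) := by
        apply Real.log_le_log (by positivity)
        exact_mod_cast Nat.le_succ i
      have hw : 0 ≤ b i - b (i+1) := by
        simp only [hb]
        have : (1:ℝ)/Real.log (i+1) ≤ 1/Real.log i :=
          div_le_div_of_nonneg_left one_pos.le hu huv
        push_cast
        linarith
      have hGb : G (i+1) ≤ Real.log i + Real.log 4 := hGle i hi2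
      have step : (b i - b (i+1)) * G (i+1) ≤ (b i - b (i+1)) * (Real.log i + Real.log 4) :=
        mul_le_mul_of_nonneg_left hGb hw
      have expand : (b i - b (i+1)) * (Real.log i + Real.log 4)
          = (1 - Real.log i / Real.log (i+1))
            + (Real.log 4 / Real.log i - Real.log 4 / Real.log (i+1)) := by
        simp only [hb]
        push_cast
        field_simp
      have keyineq : 1 - Real.log i / Real.log (i+1)
          ≤ Real.log (Real.log (i+1)) - Real.log (Real.log i) := by
        have h1 : Real.log (Real.log i / Real.log (i+1)) ≤ Real.log i / Real.log (i+1) - 1 :=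
          Real.log_le_sub_one_of_pos (by positivity)
        rw [Real.log_div hu.ne' hv.ne'] at h1
        push_cast at h1 ⊢
        linarith
      have : F (i+1) - F i = (Real.log (Real.log (i+1)) - Real.log (Real.log i))
          + (Real.log 4 / Real.log i - Real.log 4 / Real.log (i+1)) := by
        simp only [hF]
        push_cast
        ring
      rw [this]
      push_cast at step expand ⊢
      linarith
    calc ∑ i ∈ Finset.Ico 2 n, (b i - b (i+1)) * G (i+1)
        ≤ ∑ i ∈ Finset.Ico 2 n, (F (i+1) - F i) := Finset.sum_le_sum hterm
      _ = F n - F 2 := telescope_Ico F (by omega)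
  have hFn : F n ≤ Real.log (Real.log n) := by
    simp only [hF]
    have hln : (0:ℝ) < Real.log n := hlogi n (by omega)
    have : 0 ≤ Real.log 4 / Real.log n := by positivity
    linarith
  have hF2 : F 2 = Real.log (Real.log 2) - Real.log 4 / Real.log 2 := by
    simp only [hF]; norm_num
  have goal_eq : b n * G (n+1) - ∑ i ∈ Finset.range n, (b (i+1) - b i) * G (i+1)
      = b n * G (n+1) + ∑ i ∈ Finset.range n, (b i - b (i+1)) * G (i+1) := by
    rw [sub_eq_add_neg, ← Finset.sum_neg_distrib]
    congr 1
    exact Finset.sum_congr rfl fun i _ => by ring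
  rw [goal_eq]
  rw [c₂]
  rw [hF2] at key
  have hr : 2*Real.log 4/Real.log 2 = 2*(Real.log 4/Real.log 2) := by ring
  simp only [hF] at key hFn
  have hln : (0:ℝ) < Real.log n := hlogi n (by omega)
  linarith

lemma squarefree_prod_primes {S : Finset ℕ} (h : ∀ p ∈ S, p.Prime) :
    Squarefree (∏ p ∈ S, p) := by
  classical
  induction S using Finset.induction_on with
  | empty => simpa using squarefree_one
  | insert a S ha ih =>
    rw [Finset.prod_insert ha]
    have hap : a.Prime := h a (Finset.mem_insert_self a S)
    have hS : ∀ p ∈ S, p.Prime := fun p hp => h p (Finset.mem_insert_of_mem hp)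
    have hcop : Nat.Coprime a (∏ p ∈ S, p) := by
      rw [hap.coprime_iff_not_dvd]
      intro hdvd
      obtain ⟨q, hq, hdq⟩ := (Nat.Prime.prime hap).exists_mem_finset_dvd hdvd
      exact ha (((hS q hq).dvd_iff_eq hap.ne_one).mp hdq ▸ hq)
    rw [Nat.squarefree_mul_iff]
    exact ⟨hcop, hap.squarefree, ih hS⟩

lemma totient_real_prod {d : ℕ} (hd : Squarefree d) :
    (Nat.totient d : ℝ) = ∏ p ∈ d.primeFactors, ((p:ℝ) - 1) := by
  have h1 : Nat.totient d = ∏ p ∈ d.primeFactors, (p - 1) := by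
    rw [Nat.totient_eq_div_primeFactors_mul d, Nat.prod_primeFactors_of_squarefree hd,
      Nat.div_self (Nat.pos_of_ne_zero hd.ne_zero), one_mul]
  rw [h1, Nat.cast_prod]
  refine Finset.prod_congr rfl fun p hp => ?_
  have := (Nat.prime_of_mem_primeFactors hp).one_le
  push_cast [Nat.cast_sub this]
  ring

lemma rpow_prod {d : ℕ} (hd : Squarefree d) (σ : ℝ) :
    ((d:ℝ)) ^ σ = ∏ p ∈ d.primeFactors, ((p:ℝ)) ^ σ := by
  conv_lhs => rw [← Nat.prod_primeFactors_of_squarefree hd]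
  rw [Nat.cast_prod]
  exact (Real.finset_prod_rpow _ _ (fun p _ => Nat.cast_nonneg p) σ).symm

noncomputable def Cmain : ℝ :=
  Real.exp (c₂ + 1 + Real.exp (1/2) * (1/2 + Real.log 4 / 2))

/-- For `3 ≤ Y ≤ x`, the sum of `1/φ(d)` over squarefree `Y`-friable integers
`d > x^{1/3}` is `≪ (log Y) e^{−(log x)/(6 log Y)}` with an absolute constant. -/
theorem sum_inv_totient_friable_tail :
    ∃ C : ℝ, 0 < C ∧ ∀ Y x : ℝ, 3 ≤ Y → Y ≤ x →
      (∑' d : ℕ, if Squarefree d ∧ (∀ p ∈ d.primeFactors, (p : ℝ) ≤ Y) ∧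
          x ^ ((1 : ℝ) / 3) < (d : ℝ) then (1 : ℝ) / (Nat.totient d : ℝ) else 0) ≤
        C * Real.log Y * Real.exp (-(Real.log x) / (6 * Real.log Y)) := by
  classical
  refine ⟨Cmain, Real.exp_pos _, ?_⟩
  intro Y x hY hx
  set n := ⌊Y⌋₊ with hn
  have hY0 : (0:ℝ) < Y := by linarith
  have hn3 : 3 ≤ n := Nat.le_floor (by exact_mod_cast hY)
  have hnY : (n:ℝ) ≤ Y := Nat.floor_le hY0.le
  have hn0R : (0:ℝ) < n := by exact_mod_cast Nat.lt_of_lt_of_le (by norm_num) hn3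
  have hYlog : (1:ℝ) ≤ Real.log Y := by
    rw [Real.le_log_iff_exp_le hY0]
    have := Real.exp_one_lt_d9
    linarith
  have hlogY0 : (0:ℝ) < Real.log Y := lt_of_lt_of_le one_pos hYlog
  set σ : ℝ := 1/(2*Real.log Y) with hσdef
  have hσ : 0 < σ := by positivity
  have hx0 : (0:ℝ) < x := by linarith
  set X : ℝ := x ^ ((1:ℝ)/3) with hXdef
  have hX1 : (1:ℝ) < X := by
    rw [hXdef]
    apply Real.one_lt_rpow_iff_of_pos hx0 |>.mpr
    exact Or.inl ⟨by linarith, by norm_num⟩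
  have hX0 : (0:ℝ) < X := lt_trans one_pos hX1
  set P := (Finset.range (n+1)).filter Nat.Prime with hP
  have hPmem : ∀ p ∈ P, p.Prime ∧ (p:ℝ) ≤ Y := by
    intro p hp
    simp only [hP, Finset.mem_filter, Finset.mem_range] at hp
    refine ⟨hp.2, le_trans ?_ hnY⟩
    exact_mod_cast Nat.lt_succ_iff.mp hp.1
  set N := ∏ p ∈ P, p with hN
  have hN0 : 0 < N := Finset.prod_pos fun p hp => (hPmem p hp).1.pos
  -- prime factors of admissible d lie in P
  have hpfP : ∀ d : ℕ, (∀ p ∈ d.primeFactors, (p:ℝ) ≤ Y) → d.primeFactors ⊆ P := by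
    intro d hd p hp
    have hprime := Nat.prime_of_mem_primeFactors hp
    have hpY := hd p hp
    have hpn : p ≤ n := Nat.le_floor hpY
    simp only [hP, Finset.mem_filter, Finset.mem_range]
    exact ⟨by omega, hprime⟩
  -- the tsum is a finite sum
  have hsupp : ∀ d : ℕ, d ∉ Finset.range (N+1) →
      (if Squarefree d ∧ (∀ p ∈ d.primeFactors, (p : ℝ) ≤ Y) ∧
          X < (d : ℝ) then (1 : ℝ) / (Nat.totient d : ℝ) else 0) = 0 := by
    intro d hd
    rw [if_neg]
    rintro ⟨hsf, hfriable, -⟩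
    apply hd
    have h1 : d ∣ N := by
      rw [hN]
      calc d = ∏ p ∈ d.primeFactors, p := (Nat.prod_primeFactors_of_squarefree hsf).symm
        _ ∣ ∏ p ∈ P, p := Finset.prod_dvd_prod_of_subset _ _ _ (hpfP d hfriable)
    simp only [Finset.mem_range]
    exact Nat.lt_succ_of_le (Nat.le_of_dvd hN0 h1)
  rw [tsum_eq_sum hsupp]
  -- term-wise Rankin bound
  set h : ℕ → ℝ := fun p => ((p:ℝ))^σ / ((p:ℝ) - 1) with hh
  have hterm : ∀ d ∈ Finset.range (N+1),
      (if Squarefree d ∧ (∀ p ∈ d.primeFactors, (p : ℝ) ≤ Y) ∧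
          X < (d : ℝ) then (1 : ℝ) / (Nat.totient d : ℝ) else 0)
      ≤ (if Squarefree d ∧ d.primeFactors ⊆ P then
          X ^ (-σ) * ∏ p ∈ d.primeFactors, h p else 0) := by
    intro d _
    by_cases hc : Squarefree d ∧ (∀ p ∈ d.primeFactors, (p : ℝ) ≤ Y) ∧ X < (d : ℝ)
    · obtain ⟨hsf, hfr, hXd⟩ := hc
      rw [if_pos ⟨hsf, hfr, hXd⟩, if_pos ⟨hsf, hpfP d hfr⟩]
      have hφpos : (0:ℝ) < (Nat.totient d : ℝ) := by
        exact_mod_cast Nat.totient_pos.mpr (Nat.pos_of_ne_zero hsf.ne_zero)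
      have hrank : (1:ℝ) ≤ X ^ (-σ) * ((d:ℝ)) ^ σ := by
        have h1 : (1:ℝ) ≤ ((d:ℝ)/X) ^ σ := by
          have h2 : (1:ℝ) ≤ (d:ℝ)/X := by
            rw [le_div_iff₀ hX0]; linarith
          calc (1:ℝ) = 1 ^ σ := (Real.one_rpow σ).symm
            _ ≤ ((d:ℝ)/X) ^ σ := Real.rpow_le_rpow zero_le_one h2 hσ.le
        rwa [Real.div_rpow (Nat.cast_nonneg d) hX0.le, div_eq_mul_inv,
          ← Real.rpow_neg hX0.le, mul_comm] at h1
      have heq : X ^ (-σ) * ∏ p ∈ d.primeFactors, h p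
          = (X ^ (-σ) * ((d:ℝ)) ^ σ) * (1 / (Nat.totient d : ℝ)) := by
        rw [hh]
        rw [Finset.prod_div_distrib, ← rpow_prod hsf σ, ← totient_real_prod hsf]
        field_simp
      rw [heq]
      nth_rewrite 1 [← one_mul ((1:ℝ) / (Nat.totient d : ℝ))]
      apply mul_le_mul_of_nonneg_right hrank (by positivity)
    · rw [if_neg hc]
      split
      · rename_i hd2
        apply mul_nonneg (Real.rpow_nonneg hX0.le _)
        apply Finset.prod_nonneg
        intro p hp
        have hprime := Nat.prime_of_mem_primeFactors hp
        have : (1:ℝ) ≤ (p:ℝ) - 1 := by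
          have := hprime.two_le
          have : (2:ℝ) ≤ (p:ℝ) := by exact_mod_cast this
          linarith
        rw [hh]
        positivity
      · exact le_refl 0
  refine le_trans (Finset.sum_le_sum hterm) ?_
  rw [← Finset.sum_filter, ← Finset.mul_sum]
  set A := (Finset.range (N+1)).filter
      (fun d => Squarefree d ∧ d.primeFactors ⊆ P) with hA
  have hbij : ∑ d ∈ A, ∏ p ∈ d.primeFactors, h p
      = ∑ S ∈ P.powerset, ∏ p ∈ S, h p := by
    refine Finset.sum_nbij' (fun d => d.primeFactors) (fun S => ∏ p ∈ S, p)
      ?_ ?_ ?_ ?_ ?_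
    · intro d hd
      simp only [hA, Finset.mem_filter] at hd
      exact Finset.mem_powerset.mpr hd.2.2
    · intro S hS
      have hSsub := Finset.mem_powerset.mp hS
      have hSprime : ∀ p ∈ S, p.Prime := fun p hp => (hPmem p (hSsub hp)).1
      have hsf := squarefree_prod_primes hSprime
      simp only [hA, Finset.mem_filter, Finset.mem_range]
      refine ⟨Nat.lt_succ_of_le (Nat.le_of_dvd hN0 ?_), hsf, ?_⟩
      · exact Finset.prod_dvd_prod_of_subset _ _ _ hSsub
      · rw [Nat.primeFactors_prod hSprime]; exact hSsub
    · intro d hd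
      simp only [hA, Finset.mem_filter] at hd
      exact Nat.prod_primeFactors_of_squarefree hd.2.1
    · intro S hS
      have hSsub := Finset.mem_powerset.mp hS
      exact Nat.primeFactors_prod fun p hp => (hPmem p (hSsub hp)).1
    · intro d _; rfl
  rw [hbij]
  have hps : ∑ S ∈ P.powerset, ∏ p ∈ S, h p = ∏ p ∈ P, (h p + 1) := by
    rw [Finset.prod_add]
    refine Finset.sum_congr rfl fun S _ => ?_
    rw [Finset.prod_const_one, mul_one]
  rw [hps]
  -- per-factor exponential bound
  have hfact : ∀ p ∈ P, h p + 1 ≤ Real.exp (1/((p:ℝ)-1) + ((p:ℝ)^σ - 1)/p) := by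
    intro p hp
    obtain ⟨hprime, hpY⟩ := hPmem p hp
    have hp2 : (2:ℝ) ≤ (p:ℝ) := by exact_mod_cast hprime.two_le
    have hp1 : (0:ℝ) < (p:ℝ) - 1 := by linarith
    have hp0 : (0:ℝ) < (p:ℝ) := by linarith
    have htpos : (0:ℝ) < (p:ℝ)^σ := Real.rpow_pos_of_pos hp0 σ
    have hid : h p + 1 = ((p:ℝ)/((p:ℝ)-1)) * (1 + ((p:ℝ)^σ - 1)/p) := by
      rw [hh]
      field_simp
      ring
    rw [hid, Real.exp_add]
    have e1 : (p:ℝ)/((p:ℝ)-1) ≤ Real.exp (1/((p:ℝ)-1)) := by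
      have : (p:ℝ)/((p:ℝ)-1) = 1/((p:ℝ)-1) + 1 := by field_simp; ring
      rw [this]
      exact Real.add_one_le_exp _
    have e2 : 1 + ((p:ℝ)^σ - 1)/p ≤ Real.exp (((p:ℝ)^σ - 1)/p) := by
      rw [add_comm]
      exact Real.add_one_le_exp _
    have h2nonneg : (0:ℝ) ≤ 1 + ((p:ℝ)^σ - 1)/p := by
      have : (0:ℝ) ≤ ((p:ℝ)^σ)/p := by positivity
      have hsplit : 1 + ((p:ℝ)^σ - 1)/p = (1 - 1/p) + ((p:ℝ)^σ)/p := by ring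
      have h1p : 1/(p:ℝ) ≤ 1 := by
        rw [div_le_one hp0]; linarith
      linarith
    calc ((p:ℝ)/((p:ℝ)-1)) * (1 + ((p:ℝ)^σ - 1)/p)
        ≤ Real.exp (1/((p:ℝ)-1)) * (1 + ((p:ℝ)^σ - 1)/p) :=
          mul_le_mul_of_nonneg_right e1 h2nonneg
      _ ≤ Real.exp (1/((p:ℝ)-1)) * Real.exp (((p:ℝ)^σ - 1)/p) :=
          mul_le_mul_of_nonneg_left e2 (Real.exp_nonneg _)
  have hprodexp : ∏ p ∈ P, (h p + 1)
      ≤ Real.exp (∑ p ∈ P, (1/((p:ℝ)-1) + ((p:ℝ)^σ - 1)/p)) := by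
    rw [Real.exp_sum]
    refine Finset.prod_le_prod (fun p hp => ?_) hfact
    obtain ⟨hprime, _⟩ := hPmem p hp
    have hp2 : (2:ℝ) ≤ (p:ℝ) := by exact_mod_cast hprime.two_le
    have : (0:ℝ) < (p:ℝ) - 1 := by linarith
    have : (0:ℝ) < (p:ℝ)^σ := Real.rpow_pos_of_pos (by linarith) σ
    rw [hh]
    positivity
  -- bound the exponent sum
  have hE1 : ∑ p ∈ P, 1/((p:ℝ)-1) ≤ Real.log (Real.log n) + c₂ + 1 := by
    have hsub2 : P ⊆ Finset.Ico 2 (n+1) := by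
      intro p hp
      simp only [hP, Finset.mem_filter, Finset.mem_range] at hp
      simp only [Finset.mem_Ico]
      exact ⟨hp.2.two_le, hp.1⟩
    have hnonneg : ∀ m ∈ Finset.Ico 2 (n+1), m ∉ P → 0 ≤ 1/((m:ℝ)-1) - 1/m := by
      intro m hm _
      simp only [Finset.mem_Ico] at hm
      have h2 : (2:ℝ) ≤ (m:ℝ) := by exact_mod_cast hm.1
      have hm1 : (0:ℝ) < (m:ℝ) - 1 := by linarith
      have := one_div_le_one_div_of_le hm1 (by linarith : (m:ℝ) - 1 ≤ (m:ℝ))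
      linarith
    have htel : ∑ m ∈ Finset.Ico 2 (n+1), (1/((m:ℝ)-1) - 1/m) ≤ 1 := by
      have hcongr : ∑ m ∈ Finset.Ico 2 (n+1), (1/((m:ℝ)-1) - 1/m)
          = ∑ m ∈ Finset.Ico 2 (n+1),
            (-(1/(((m+1:ℕ):ℝ)-1)) - -(1/((m:ℝ)-1))) := by
        refine Finset.sum_congr rfl fun m hm => ?_
        simp only [Finset.mem_Ico] at hm
        have h2 : (2:ℝ) ≤ (m:ℝ) := by exact_mod_cast hm.1
        push_cast
        ring_nf
      rw [hcongr, telescope_Ico (fun k => -(1/((k:ℝ)-1))) (by omega : 2 ≤ n+1)]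
      push_cast
      have : (0:ℝ) < (n:ℝ) + 1 - 1 := by linarith
      have : (0:ℝ) ≤ 1/((n:ℝ) + 1 - 1) := by positivity
      norm_num
    have hsplit : ∑ p ∈ P, (1/((p:ℝ)-1) - 1/p) ≤ 1 :=
      le_trans (Finset.sum_le_sum_of_subset_of_nonneg hsub2 hnonneg) htel
    have hm2 := mertens2 n hn3
    have hsum : ∑ p ∈ P, 1/((p:ℝ)-1)
        = ∑ p ∈ P, (1/((p:ℝ)-1) - 1/p) + ∑ p ∈ P, (1:ℝ)/p := by
      rw [← Finset.sum_add_distrib]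
      exact Finset.sum_congr rfl fun p _ => by ring
    rw [hsum]
    rw [← hP] at hm2
    linarith
  have hσY : σ * Real.log Y = 1/2 := by
    rw [hσdef]; field_simp
  have hE2 : ∑ p ∈ P, ((p:ℝ)^σ - 1)/p
      ≤ Real.exp (1/2) * (1/2 + Real.log 4 / 2) := by
    have hterm2 : ∀ p ∈ P, ((p:ℝ)^σ - 1)/p
        ≤ (σ * Real.exp (1/2)) * (Real.log p / p) := by
      intro p hp
      obtain ⟨hprime, hpY⟩ := hPmem p hp
      have hp2 : (2:ℝ) ≤ (p:ℝ) := by exact_mod_cast hprime.two_le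
      have hp0 : (0:ℝ) < (p:ℝ) := by linarith
      set t := Real.log p * σ with ht
      have htnn : 0 ≤ t := mul_nonneg (Real.log_natCast_nonneg p) hσ.le
      have hpσ : (p:ℝ)^σ = Real.exp t := Real.rpow_def_of_pos hp0 σ
      have htle : t ≤ 1/2 := by
        rw [ht, ← hσY]
        have : Real.log p ≤ Real.log Y := Real.log_le_log hp0 hpY
        nlinarith
      have hexpt : Real.exp t ≤ Real.exp (1/2) := Real.exp_le_exp.mpr htle
      have hkey : Real.exp t - 1 ≤ t * Real.exp t := by
        have h1 := Real.add_one_le_exp (-t)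
        have h2 : (-t + 1) * Real.exp t ≤ Real.exp (-t) * Real.exp t :=
          mul_le_mul_of_nonneg_right h1 (Real.exp_pos t).le
        rw [← Real.exp_add, neg_add_cancel, Real.exp_zero] at h2
        ring_nf at h2 ⊢
        linarith
      have hnum : (p:ℝ)^σ - 1 ≤ (σ * Real.exp (1/2)) * Real.log p := by
        rw [hpσ]
        calc Real.exp t - 1 ≤ t * Real.exp t := hkey
          _ ≤ t * Real.exp (1/2) := mul_le_mul_of_nonneg_left hexpt htnn
          _ = (σ * Real.exp (1/2)) * Real.log p := by rw [ht]; ring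
      rw [div_le_iff₀ hp0]
      calc (p:ℝ)^σ - 1 ≤ (σ * Real.exp (1/2)) * Real.log p := hnum
        _ = (σ * Real.exp (1/2)) * (Real.log p / p) * p := by field_simp
    calc ∑ p ∈ P, ((p:ℝ)^σ - 1)/p
        ≤ ∑ p ∈ P, (σ * Real.exp (1/2)) * (Real.log p / p) := Finset.sum_le_sum hterm2
      _ = (σ * Real.exp (1/2)) * ∑ p ∈ P, Real.log p / p := by rw [Finset.mul_sum]
      _ ≤ (σ * Real.exp (1/2)) * (Real.log Y + Real.log 4) := by
          apply mul_le_mul_of_nonneg_left ?_ (by positivity)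
          refine le_trans (mertens1 n (by omega)) ?_
          have : Real.log n ≤ Real.log Y := Real.log_le_log hn0R hnY
          linarith
      _ ≤ Real.exp (1/2) * (1/2 + Real.log 4 / 2) := by
          have hlog4 : (0:ℝ) < Real.log 4 := Real.log_pos (by norm_num)
          have hexp : (0:ℝ) < Real.exp (1/2) := Real.exp_pos _
          have hσhalf : σ ≤ 1/2 := by
            rw [hσdef]
            exact one_div_le_one_div_of_le two_pos (by linarith)
          have hσ4 : σ * Real.log 4 ≤ Real.log 4 / 2 := by
            have := mul_le_mul_of_nonneg_right hσhalf hlog4.le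
            linarith
          have expand : (σ * Real.exp (1/2)) * (Real.log Y + Real.log 4)
              = Real.exp (1/2) * (σ * Real.log Y + σ * Real.log 4) := by ring
          rw [expand, hσY]
          apply mul_le_mul_of_nonneg_left ?_ hexp.le
          linarith
  -- assemble exponential bound
  have hlogn0 : (0:ℝ) < Real.log n := Real.log_pos (by exact_mod_cast (by omega : 1 < n))
  have hexpE : Real.exp (∑ p ∈ P, (1/((p:ℝ)-1) + ((p:ℝ)^σ - 1)/p))
      ≤ Cmain * Real.log Y := by
    have hEle : ∑ p ∈ P, (1/((p:ℝ)-1) + ((p:ℝ)^σ - 1)/p)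
        ≤ Real.log (Real.log n) + (c₂ + 1 + Real.exp (1/2) * (1/2 + Real.log 4 / 2)) := by
      rw [Finset.sum_add_distrib]
      linarith [hE1, hE2]
    calc Real.exp (∑ p ∈ P, (1/((p:ℝ)-1) + ((p:ℝ)^σ - 1)/p))
        ≤ Real.exp (Real.log (Real.log n)
            + (c₂ + 1 + Real.exp (1/2) * (1/2 + Real.log 4 / 2))) := Real.exp_le_exp.mpr hEle
      _ = Real.log n * Real.exp (c₂ + 1 + Real.exp (1/2) * (1/2 + Real.log 4 / 2)) := by
          rw [Real.exp_add, Real.exp_log hlogn0]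
      _ ≤ Real.log Y * Real.exp (c₂ + 1 + Real.exp (1/2) * (1/2 + Real.log 4 / 2)) := by
          apply mul_le_mul_of_nonneg_right (Real.log_le_log hn0R hnY) (Real.exp_nonneg _)
      _ = Cmain * Real.log Y := by rw [Cmain]; ring
  have hXσ : X ^ (-σ) = Real.exp (-(Real.log x)/(6*Real.log Y)) := by
    rw [hXdef, ← Real.rpow_mul hx0.le, Real.rpow_def_of_pos hx0, Real.exp_eq_exp, hσdef]
    field_simp
    try ring_nf
    try tauto
  calc X ^ (-σ) * ∏ p ∈ P, (h p + 1)
      ≤ X ^ (-σ) * Real.exp (∑ p ∈ P, (1/((p:ℝ)-1) + ((p:ℝ)^σ - 1)/p)) :=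
        mul_le_mul_of_nonneg_left hprodexp (Real.rpow_nonneg hX0.le _)
    _ ≤ X ^ (-σ) * (Cmain * Real.log Y) :=
        mul_le_mul_of_nonneg_left hexpE (Real.rpow_nonneg hX0.le _)
    _ = Cmain * Real.log Y * Real.exp (-(Real.log x)/(6*Real.log Y)) := by
        rw [hXσ]; ring
end
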